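/- Let G be a finite simple graph without isolated vertices, with minimum degree δ, and let a > 0 be a real number. Then ISD_a(G) ≤ (1/2)·δ^{-a}·AG(G), and equality holds if and only if G is regular. -/

import Mathlib

open Finset Real

/-- The variable inverse sum deg index
`ISD_a(G) = Σ_{uv ∈ E(G)} 1/(d_u^a + d_v^a)`. -/
noncomputable def ISD {V : Type*} [Fintype V] [DecidableEq V] (G : SimpleGraph V)
    [DecidableRel G.Adj] (a : ℝ) : ℝ :=
  ∑ e ∈ G.edgeFinset,
    Sym2.lift ⟨fun u v => 1 / ((G.degree u : ℝ) ^ a + (G.degree v : ℝ) ^ a),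
      fun u v => by simp [add_comm]⟩ e

/-- The arithmetic-geometric index `AG(G) = Σ_{uv ∈ E(G)} (d_u + d_v)/(2√(d_u d_v))`. -/
noncomputable def arithGeomIdx {V : Type*} [Fintype V] [DecidableEq V] (G : SimpleGraph V)
    [DecidableRel G.Adj] : ℝ :=
  ∑ e ∈ G.edgeFinset,
    Sym2.lift ⟨fun u v => ((G.degree u : ℝ) + (G.degree v : ℝ)) /
        (2 * Real.sqrt ((G.degree u : ℝ) * (G.degree v : ℝ))),
      fun u v => by dsimp only; rw [mul_comm ((G.degree u : ℝ)), add_comm ((G.degree u : ℝ))]⟩ e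

/-!
Each edge term of `ISD_a` is `1/(d_u^a + d_v^a) ≤ 1/(2δ^a)`, strictly unless `d_u = d_v = δ`,
while each edge term of `AG` is at least `1` by AM-GM. Summing over the edges gives the
inequality; equality forces every endpoint of every edge, hence (no isolated vertices) every
vertex, to have degree `δ`.
-/

namespace Real

lemma one_le_add_div_two_sqrt_mul {x y : ℝ} (hx : 0 < x) (hy : 0 < y) :
    1 ≤ (x + y) / (2 * √(x * y)) := by
  rw [one_le_div (by positivity), sqrt_mul hx.le]
  nlinarith [sq_nonneg (√x - √y), sq_sqrt hx.le, sq_sqrt hy.le]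

variable {a d x y : ℝ}

lemma one_div_rpow_add_rpow_le (ha : 0 < a) (hd : 0 < d) (hx : d ≤ x) (hy : d ≤ y) :
    1 / (x ^ a + y ^ a) ≤ 1 / 2 * d ^ (-a) := by
  rw [rpow_neg hd.le, ← one_div, one_div_mul_one_div]
  gcongr
  linarith [rpow_le_rpow hd.le hx ha.le, rpow_le_rpow hd.le hy ha.le]

lemma one_div_rpow_add_rpow_lt (ha : 0 < a) (hd : 0 < d) (hx : d < x) (hy : d ≤ y) :
    1 / (x ^ a + y ^ a) < 1 / 2 * d ^ (-a) := by
  rw [rpow_neg hd.le, ← one_div, one_div_mul_one_div]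
  gcongr
  linarith [rpow_lt_rpow hd.le hx ha, rpow_le_rpow hd.le hy ha.le]

lemma one_div_rpow_add_rpow_le_mul_add_div_two_sqrt_mul (ha : 0 < a) (hd : 0 < d)
    (hx : d ≤ x) (hy : d ≤ y) :
    1 / (x ^ a + y ^ a) ≤ 1 / 2 * d ^ (-a) * ((x + y) / (2 * √(x * y))) :=
  calc 1 / (x ^ a + y ^ a) ≤ 1 / 2 * d ^ (-a) := one_div_rpow_add_rpow_le ha hd hx hy
    _ ≤ 1 / 2 * d ^ (-a) * ((x + y) / (2 * √(x * y))) :=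
      le_mul_of_one_le_right (by positivity)
        (one_le_add_div_two_sqrt_mul (hd.trans_le hx) (hd.trans_le hy))

lemma one_div_rpow_add_rpow_eq_mul_add_div_two_sqrt_mul_iff (ha : 0 < a) (hd : 0 < d)
    (hx : d ≤ x) (hy : d ≤ y) :
    1 / (x ^ a + y ^ a) = 1 / 2 * d ^ (-a) * ((x + y) / (2 * √(x * y))) ↔ x = d ∧ y = d := by
  refine ⟨fun h => ?_, ?_⟩
  · have hAG := one_le_add_div_two_sqrt_mul (hd.trans_le hx) (hd.trans_le hy)
    by_contra hne
    have hlt : 1 / (x ^ a + y ^ a) < 1 / 2 * d ^ (-a) := by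
      rcases not_and_or.mp hne with hxd | hyd
      · exact one_div_rpow_add_rpow_lt ha hd (lt_of_le_of_ne hx (Ne.symm hxd)) hy
      · rw [add_comm]
        exact one_div_rpow_add_rpow_lt ha hd (lt_of_le_of_ne hy (Ne.symm hyd)) hx
    exact hlt.not_ge ((le_mul_of_one_le_right (by positivity) hAG).trans_eq h.symm)
  · rintro ⟨rfl, rfl⟩
    rw [sqrt_mul_self hd.le, rpow_neg hd.le]
    field_simp
    ring

end Real

namespace SimpleGraph

variable {V : Type*} [Fintype V] [DecidableEq V] (G : SimpleGraph V) [DecidableRel G.Adj]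
  {a : ℝ}

lemma ISD_le_mul_arithGeomIdx (hδ : 0 < G.minDegree) (ha : 0 < a) :
    ISD G a ≤ 1 / 2 * (G.minDegree : ℝ) ^ (-a) * arithGeomIdx G := by
  rw [ISD, arithGeomIdx, mul_sum]
  refine sum_le_sum fun e _ => ?_
  induction e using Sym2.ind with
  | _ u v =>
    exact Real.one_div_rpow_add_rpow_le_mul_add_div_two_sqrt_mul ha (by exact_mod_cast hδ)
      (by exact_mod_cast G.minDegree_le_degree u) (by exact_mod_cast G.minDegree_le_degree v)

lemma ISD_eq_mul_arithGeomIdx_iff (hδ : 0 < G.minDegree) (ha : 0 < a) :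
    ISD G a = 1 / 2 * (G.minDegree : ℝ) ^ (-a) * arithGeomIdx G ↔
      ∀ u v, G.Adj u v → G.degree u = G.minDegree ∧ G.degree v = G.minDegree := by
  have hδ' : (0 : ℝ) < G.minDegree := by exact_mod_cast hδ
  have hdeg (v : V) : (G.minDegree : ℝ) ≤ G.degree v := by exact_mod_cast G.minDegree_le_degree v
  rw [ISD, arithGeomIdx, mul_sum, sum_eq_sum_iff_of_le fun e _ => ?_]
  · simp only [Sym2.forall, mem_edgeFinset, mem_edgeSet, Sym2.lift_mk]
    refine forall₂_congr fun u v => imp_congr_right fun _ => ?_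
    rw [Real.one_div_rpow_add_rpow_eq_mul_add_div_two_sqrt_mul_iff ha hδ' (hdeg u) (hdeg v)]
    norm_cast
  · induction e using Sym2.ind with
    | _ u v =>
      exact Real.one_div_rpow_add_rpow_le_mul_add_div_two_sqrt_mul ha hδ' (hdeg u) (hdeg v)

end SimpleGraph

theorem stmt_11 {V : Type*} [Fintype V] [DecidableEq V] [Nonempty V] (G : SimpleGraph V)
    [DecidableRel G.Adj] (hiso : ∀ v : V, 0 < G.degree v) (a : ℝ) (ha : 0 < a) :
    ((ISD G a ≤ 1 / 2 * (G.minDegree : ℝ) ^ (-a) * arithGeomIdx G) ∧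
    (ISD G a = 1 / 2 * (G.minDegree : ℝ) ^ (-a) * arithGeomIdx G ↔ ∃ k, ∀ v : V, G.degree v = k)) := by
  have hδ : 0 < G.minDegree := G.le_minDegree_of_forall_le_degree 1 hiso
  refine ⟨G.ISD_le_mul_arithGeomIdx hδ ha, (G.ISD_eq_mul_arithGeomIdx_iff hδ ha).trans ⟨?_, ?_⟩⟩
  · intro h
    refine ⟨G.minDegree, fun v => ?_⟩
    obtain ⟨u, hvu⟩ := (G.degree_pos_iff_exists_adj v).mp (hiso v)
    exact (h v u hvu).1
  · rintro ⟨k, hk⟩ u v -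
    have hδk : G.minDegree = k := SimpleGraph.IsRegularOfDegree.minDegree_eq G hk
    exact ⟨(hk u).trans hδk.symm, (hk v).trans hδk.symm⟩
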